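/- arXiv:1306.1935 — 4 statements merged into one kernel-verified Lean document; each statement's English description precedes it below -/
import Mathlib

section
/- Let S be a semigroup with zero 0_S, λ a cardinal ≥ 1, and B⁰_λ(S) its Brandt λ⁰-extension. Suppose τ is a topology on B⁰_λ(S) making it a semitopological semigroup. Then for all indices α, β, γ, δ ∈ λ, the subspaces S_{α,β} = {(α,s,β) : s ∈ S\{0_S}} ∪ {0} and S_{γ,δ} of B⁰_λ(S) are homeomorphic; moreover S_{α,α} and S_{β,β} are topologically isomorphic as semitopological monoids. -/
open Topology Set Filter

/-- The underlying set of the Brandt `λ⁰`-extension `B⁰_λ(S)`: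
nonzero elements are triples `(α, s, β)` with `s ≠ 0`, and `none` is the zero. -/
abbrev Brandt (S : Type*) [Zero S] (lam : Type*) : Type _ :=
  Option (lam × {s : S // s ≠ 0} × lam)

open Classical in
/-- Multiplication of the Brandt `λ⁰`-extension. -/
noncomputable def brandtMul {S : Type*} [MonoidWithZero S] {lam : Type*} :
    Brandt S lam → Brandt S lam → Brandt S lam
  | some (α, a, β), some (γ, b, δ) =>
      if h : β = γ ∧ a.1 * b.1 ≠ 0 then some (α, ⟨a.1 * b.1, h.2⟩, δ) else none
  | _, _ => none

/-- The set `S*_{α,β}` of nonzero elements of the `(α,β)` sheet. -/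
def sheet {S : Type*} [Zero S] {lam : Type*} (α β : lam) : Set (Brandt S lam) :=
  {x | ∃ s : {s : S // s ≠ 0}, x = some (α, s, β)}

/-- The sheet `S_{α,β} = S*_{α,β} ∪ {0}`. -/
def sheet0 {S : Type*} [Zero S] {lam : Type*} (α β : lam) : Set (Brandt S lam) :=
  sheet α β ∪ {none}

/-- The trace `(U)*_{α,β}` of a subset `U ⊆ S` on the `(α,β)` sheet (zero removed). -/
def sheetTrace {S : Type*} [Zero S] {lam : Type*} (α β : lam) (U : Set S) :
    Set (Brandt S lam) :=
  {x | ∃ s : {s : S // s ≠ 0}, s.1 ∈ U ∧ x = some (α, s, β)}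

/-- The basic neighbourhood `U_A(0)` of zero: all sheets outside the finite set `A`
together with the traces of `U` on the sheets from `A`. -/
def UA0 {S : Type*} [Zero S] {lam : Type*} (A : Set (lam × lam)) (U : Set S) :
    Set (Brandt S lam) :=
  {x | x = none ∨ ∃ (α β : lam) (s : {s : S // s ≠ 0}),
        x = some (α, s, β) ∧ ((α, β) ∉ A ∨ s.1 ∈ U)}

/-- The canonical topology `τ_B^S` on the Brandt `λ⁰`-extension, generated by the base
consisting of traces of open subsets of `S` on the sheets and of the sets `U_A(0)`. -/
def brandtTop (S : Type*) [Zero S] [TopologicalSpace S] (lam : Type*) :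
    TopologicalSpace (Brandt S lam) :=
  TopologicalSpace.generateFrom
    ({W | ∃ (α β : lam) (U : Set S), IsOpen U ∧ W = sheetTrace α β U} ∪
     {W | ∃ A : Set (lam × lam), A.Finite ∧
        ∃ U : Set S, IsOpen U ∧ (0 : S) ∈ U ∧ W = UA0 A U})

open Classical in
/-- The canonical copy of `S` as the sheet `S_{α,α}` inside `B⁰_λ(S)`. -/
noncomputable def brandtIncl {S : Type*} [Zero S] {lam : Type*} (α : lam) (s : S) :
    Brandt S lam :=
  if h : s = 0 then none else some (α, ⟨s, h⟩, α)

/-- Separate continuity of a multiplication. -/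
def SepCont {X : Type*} [TopologicalSpace X] (m : X → X → X) : Prop :=
  ∀ t : X, Continuous (m t) ∧ Continuous (fun x => m x t)

/-- A family of subsets is locally finite. -/
def SetLocallyFinite {X : Type*} [TopologicalSpace X] (F : Set (Set X)) : Prop :=
  ∀ x : X, ∃ U : Set X, x ∈ U ∧ IsOpen U ∧ {A ∈ F | (A ∩ U).Nonempty}.Finite

/-- `X` is pseudocompact: every locally finite family of nonempty open subsets is finite. -/
def Pseudocompact (X : Type*) [TopologicalSpace X] : Prop :=
  ∀ F : Set (Set X), (∀ U ∈ F, IsOpen U ∧ U.Nonempty) → SetLocallyFinite F → F.Finite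

/-- `X` is countably pracompact: there is a dense set `A` such that every infinite
subset of `A` has an accumulation point in `X`. -/
def CountablyPracompact (X : Type*) [TopologicalSpace X] : Prop :=
  ∃ A : Set X, Dense A ∧ ∀ B ⊆ A, B.Infinite → ∃ x : X, AccPt x (𝓟 B)

/-- `X` is countably compact: every countable open cover has a finite subcover. -/
def CountablyCompactSp (X : Type*) [TopologicalSpace X] : Prop :=
  ∀ F : Set (Set X), F.Countable → (∀ U ∈ F, IsOpen U) → ⋃₀ F = univ →
    ∃ G ⊆ F, G.Finite ∧ ⋃₀ G = univ

/-!
Left multiplication by `(γ, 1, α)` and right multiplication by `(β, 1, δ)` are continuous and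
together carry `(α, s, β)` to `(γ, s, δ)`, so they restrict to a continuous map
`S_{α,β} → S_{γ,δ}` that only relabels the indices; relabelling back is its inverse, and
relabelling a diagonal sheet respects products. When `1 = 0` every sheet is `{0}`.
-/

section BrandtSheets

variable {S lam : Type*} [MonoidWithZero S]

@[simp]
lemma brandtMul_none_left (x : Brandt S lam) : brandtMul none x = none := by
  cases x <;> rfl

@[simp]
lemma brandtMul_none_right (x : Brandt S lam) : brandtMul x none = none := by
  cases x <;> rfl

lemma brandtMul_some_some {α β δ : lam} (a b : {s : S // s ≠ 0}) (hab : a.1 * b.1 ≠ 0) :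
    brandtMul (some (α, a, β)) (some (β, b, δ)) = some (α, ⟨a.1 * b.1, hab⟩, δ) := by
  simp [brandtMul, hab]

lemma brandtMul_some_some_of_mul_eq_zero {α β γ δ : lam} (a b : {s : S // s ≠ 0})
    (hab : a.1 * b.1 = 0) : brandtMul (some (α, a, β)) (some (γ, b, δ)) = none := by
  simp [brandtMul, hab]

def brandtRelabel (γ δ : lam) : Brandt S lam → Brandt S lam :=
  Option.map fun p => (γ, p.2.1, δ)

lemma brandtRelabel_mem_sheet0 (γ δ : lam) (x : Brandt S lam) :
    brandtRelabel γ δ x ∈ sheet0 (S := S) γ δ := by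
  rcases x with _ | ⟨α, s, β⟩
  · exact Or.inr rfl
  · exact Or.inl ⟨s, rfl⟩

lemma brandtRelabel_brandtRelabel (α β γ δ : lam) (x : Brandt S lam) :
    brandtRelabel α β (brandtRelabel γ δ x) = brandtRelabel α β x := by
  simp [brandtRelabel, Option.map_map, Function.comp_def]

lemma brandtRelabel_of_mem_sheet0 {α β : lam} {x : Brandt S lam}
    (hx : x ∈ sheet0 (S := S) α β) : brandtRelabel α β x = x := by
  rcases hx with ⟨s, rfl⟩ | rfl <;> rfl

lemma brandtRelabel_brandtMul {α β γ α' β' γ' : lam} {x y : Brandt S lam}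
    (hx : x ∈ sheet0 (S := S) α β) (hy : y ∈ sheet0 (S := S) β γ) :
    brandtRelabel α' γ' (brandtMul x y) =
      brandtMul (brandtRelabel α' β' x) (brandtRelabel β' γ' y) := by
  rcases hx with ⟨a, rfl⟩ | rfl
  · rcases hy with ⟨b, rfl⟩ | rfl
    · by_cases hab : a.1 * b.1 = 0
      · simp only [brandtRelabel, Option.map_some, brandtMul_some_some_of_mul_eq_zero a b hab,
          Option.map_none]
      · simp only [brandtRelabel, Option.map_some, brandtMul_some_some a b hab]
    · simp [brandtRelabel]
  · simp [brandtRelabel]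

lemma brandtMul_brandtMul_eq_brandtRelabel {α β γ δ : lam} (h10 : (1 : S) ≠ 0)
    {x : Brandt S lam} (hx : x ∈ sheet0 (S := S) α β) :
    brandtMul (brandtMul (some (γ, ⟨1, h10⟩, α)) x) (some (β, ⟨1, h10⟩, δ)) =
      brandtRelabel γ δ x := by
  rcases hx with ⟨s, rfl⟩ | rfl
  · have hs : (1 : S) * s.1 ≠ 0 := by simpa using s.2
    have hs' : (1 : S) * s.1 * 1 ≠ 0 := by simpa using s.2
    rw [brandtMul_some_some _ _ hs, brandtMul_some_some _ ⟨1, h10⟩ hs']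
    simp [brandtRelabel]
  · simp [brandtRelabel]

lemma sheet0_subsingleton_of_one_eq_zero (h10 : (1 : S) = 0) (α β : lam) :
    (sheet0 (S := S) α β).Subsingleton := by
  have hS : ∀ s : S, s = 0 := fun s => by simpa [h10] using (mul_one s).symm
  refine (Set.subsingleton_singleton (a := none)).anti ?_
  rintro _ (⟨s, rfl⟩ | rfl)
  · exact absurd (hS s.1) s.2
  · rfl

variable [TopologicalSpace (Brandt S lam)]

lemma continuousOn_brandtRelabel (hsep : SepCont (brandtMul (S := S) (lam := lam)))
    (α β γ δ : lam) : ContinuousOn (brandtRelabel γ δ) (sheet0 (S := S) α β) := by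
  by_cases h10 : (1 : S) = 0
  · exact (sheet0_subsingleton_of_one_eq_zero h10 α β).continuousOn _
  · have hcont : Continuous fun x : Brandt S lam =>
        brandtMul (brandtMul (some (γ, ⟨1, h10⟩, α)) x) (some (β, ⟨1, h10⟩, δ)) :=
      (hsep _).2.comp (hsep _).1
    exact hcont.continuousOn.congr fun _ hx =>
      (brandtMul_brandtMul_eq_brandtRelabel h10 hx).symm

def sheetHomeo (hsep : SepCont (brandtMul (S := S) (lam := lam))) (α β γ δ : lam) :
    sheet0 (S := S) α β ≃ₜ sheet0 (S := S) γ δ where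
  toFun x := ⟨brandtRelabel γ δ x.1, brandtRelabel_mem_sheet0 γ δ x.1⟩
  invFun x := ⟨brandtRelabel α β x.1, brandtRelabel_mem_sheet0 α β x.1⟩
  left_inv x := Subtype.ext <|
    (brandtRelabel_brandtRelabel ..).trans (brandtRelabel_of_mem_sheet0 x.2)
  right_inv x := Subtype.ext <|
    (brandtRelabel_brandtRelabel ..).trans (brandtRelabel_of_mem_sheet0 x.2)
  continuous_toFun :=
    (continuousOn_brandtRelabel hsep α β γ δ).mapsToRestrict fun x _ =>
      brandtRelabel_mem_sheet0 γ δ x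
  continuous_invFun :=
    (continuousOn_brandtRelabel hsep γ δ α β).mapsToRestrict fun x _ =>
      brandtRelabel_mem_sheet0 α β x

end BrandtSheets

/-- In any topology making the Brandt extension a semitopological semigroup, all the
sheets `S_{α,β}` are homeomorphic, and the diagonal sheets `S_{α,α}`, `S_{β,β}` are
topologically isomorphic (multiplication- and zero-preserving homeomorphic). -/
theorem brandt_sheets_homeomorphic {S lam : Type*} [MonoidWithZero S]
    [tB : TopologicalSpace (Brandt S lam)]
    (hsep : SepCont (brandtMul (S := S) (lam := lam))) :
    ∀ α β γ δ : lam,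
      Nonempty (↥(sheet0 (S := S) α β) ≃ₜ ↥(sheet0 (S := S) γ δ)) ∧
      ∃ g : ↥(sheet0 (S := S) α α) ≃ₜ ↥(sheet0 (S := S) β β),
        (∀ (x y : ↥(sheet0 (S := S) α α))
            (hxy : brandtMul x.1 y.1 ∈ sheet0 (S := S) α α),
          (g ⟨brandtMul x.1 y.1, hxy⟩).1 = brandtMul (g x).1 (g y).1) ∧
        (∀ h0 : (none : Brandt S lam) ∈ sheet0 (S := S) α α, (g ⟨none, h0⟩).1 = none) := by
  intro α β γ δ
  exact ⟨⟨sheetHomeo hsep α β γ δ⟩, sheetHomeo hsep α α β β,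
    fun x y _ => brandtRelabel_brandtMul x.2 y.2, fun _ => rfl⟩
end

section
/- Let λ ≥ 1 be a cardinal and let B⁰_λ(S) be a topological Brandt λ⁰-extension of a semitopological monoid S with zero in the class of Hausdorff semitopological semigroups. If B⁰_λ(S) is countably compact, then for every open neighbourhood U of the zero 0 of B⁰_λ(S) there exist only finitely many pairs (α,β) ∈ λ × λ with S_{α,β} ⊄ U. -/
open Topology Set Filter

/-!
Left and right multiplication by the idempotents `(γ, 1, γ)` and `(δ, 1, δ)` is continuous, fixes
`S*_{γ,δ}` pointwise and sends everything else to `0`; so by `T₁` each `S*_{γ,δ}` is the preimage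
of the open set `B⁰_λ(S) \ {0}`, hence open. If infinitely many sheets left `U`, one point outside
`U` from each of them would form an infinite set meeting each of these pairwise disjoint open sets
at most once. Its accumulation point lies in the closed set outside `U`, hence in some `S*_{γ,δ}`,
which is impossible.
-/

open Function

theorem CountablyCompactSp.countablyCompactSpace {X : Type*} [TopologicalSpace X]
    (h : CountablyCompactSp X) : CountablyCompactSpace X := by
  refine ⟨isCountablyCompact_iff_countable_open_cover'.2 fun V hVo hcov => ?_⟩
  have hG := h (range V) (countable_range V) (forall_mem_range.2 hVo)
    (univ_subset_iff.1 (sUnion_range V ▸ hcov))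
  rw [← image_univ, exists_subset_image_finite_and] at hG
  obtain ⟨t, -, htfin, hGcov⟩ := hG
  exact ⟨t, htfin, by rw [← sUnion_image, hGcov]⟩

theorem IsClosed.finite_setOf_inter_nonempty_of_pairwise_disjoint {X ι : Type*}
    [TopologicalSpace X] [T1Space X] [CountablyCompactSpace X] {C : Set X} (hC : IsClosed C)
    {V : ι → Set X} (hV : ∀ i, IsOpen (V i)) (hd : Pairwise (Disjoint on V))
    (hCV : C ⊆ ⋃ i, V i) : {i | (V i ∩ C).Nonempty}.Finite := by
  set P := {i | (V i ∩ C).Nonempty}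
  by_contra hinf
  have : Nonempty X := (Set.Infinite.nonempty hinf).elim fun _ hi => hi.to_subtype.map (↑)
  choose! b hbV hbC using fun i (hi : i ∈ P) => hi
  have hb_eq {i j} (hi : i ∈ P) (hj : b i ∈ V j) : i = j :=
    hd.eq (not_disjoint_iff.2 ⟨b i, hbV i hi, hj⟩)
  have hinj : InjOn b P := fun i hi j hj h => hb_eq hi (h ▸ hbV j hj)
  obtain ⟨x, -, hx⟩ := CountablyCompactSpace.isCountablyCompact_univ.exists_accPt_of_infinite
    (subset_univ _) (Infinite.image hinj hinf)
  have hxC : x ∈ C := hC.closure_subset_iff.2 (image_subset_iff.2 hbC) hx.clusterPt.mem_closure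
  obtain ⟨j, hj⟩ := mem_iUnion.1 (hCV hxC)
  refine Set.Infinite.of_accPt (hx.nhds_inter ((hV j).mem_nhds hj))
    ((finite_singleton (b j)).subset ?_)
  rintro _ ⟨hyV, i, hi, rfl⟩
  rw [hb_eq hi hyV, mem_singleton_iff]

section Brandt

variable {S lam : Type*} [MonoidWithZero S]

theorem some_mem_sheet_iff {α β γ δ : lam} {s : {s : S // s ≠ 0}} :
    some (α, s, β) ∈ sheet γ δ ↔ α = γ ∧ β = δ := by
  constructor
  · rintro ⟨t, h⟩
    simp_all
  · rintro ⟨rfl, rfl⟩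
    exact ⟨s, rfl⟩

theorem none_notMem_sheet (γ δ : lam) : (none : Brandt S lam) ∉ sheet γ δ := by
  simp [sheet]

theorem pairwise_disjoint_sheet :
    Pairwise (Disjoint on fun p : lam × lam => sheet (S := S) p.1 p.2) := by
  rintro ⟨α, β⟩ ⟨γ, δ⟩ hne
  refine disjoint_left.2 ?_
  rintro _ ⟨s, rfl⟩ h
  exact hne (by simpa using (some_mem_sheet_iff.1 h))

theorem compl_singleton_none_subset_iUnion_sheet :
    ({none}ᶜ : Set (Brandt S lam)) ⊆ ⋃ p : lam × lam, sheet p.1 p.2 := by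
  rintro (_ | ⟨α, s, β⟩) hx
  · exact absurd rfl hx
  · exact mem_iUnion.2 ⟨(α, β), s, rfl⟩

theorem not_sheet0_subset_iff {U : Set (Brandt S lam)} (hU : none ∈ U) {α β : lam} :
    ¬ sheet0 α β ⊆ U ↔ (sheet α β ∩ Uᶜ).Nonempty := by
  rw [inter_compl_nonempty_iff, sheet0, union_subset_iff, singleton_subset_iff, and_iff_left hU]

section Nontrivial

variable [Nontrivial S]

def brandtUnit (α : lam) : Brandt S lam := some (α, ⟨1, one_ne_zero⟩, α)

noncomputable def sheetProj (γ δ : lam) (x : Brandt S lam) : Brandt S lam :=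
  brandtMul (brandtMul (brandtUnit γ) x) (brandtUnit δ)

theorem sheetProj_of_mem {γ δ : lam} {x : Brandt S lam} (hx : x ∈ sheet γ δ) :
    sheetProj γ δ x = x := by
  obtain ⟨s, rfl⟩ := hx
  simp [sheetProj, brandtUnit, brandtMul, s.2]

theorem sheetProj_of_notMem {γ δ : lam} {x : Brandt S lam} (hx : x ∉ sheet γ δ) :
    sheetProj γ δ x = none := by
  rcases x with _ | ⟨α, s, β⟩
  · rfl
  · rw [some_mem_sheet_iff] at hx
    by_cases hγ : γ = α
    · subst hγ
      simpa [sheetProj, brandtUnit, brandtMul, s.2] using hx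
    · simp [sheetProj, brandtUnit, brandtMul, hγ]

theorem sheet_eq_preimage_sheetProj (γ δ : lam) :
    sheet (S := S) γ δ = sheetProj γ δ ⁻¹' {none}ᶜ := by
  ext x
  by_cases hx : x ∈ sheet γ δ
  · simp only [hx, mem_preimage, sheetProj_of_mem hx, true_iff]
    exact ne_of_mem_of_not_mem hx (none_notMem_sheet γ δ)
  · simp [hx, sheetProj_of_notMem hx]

end Nontrivial

theorem isOpen_sheet [TopologicalSpace (Brandt S lam)] [T1Space (Brandt S lam)]
    (hsep : SepCont (brandtMul (S := S) (lam := lam))) (γ δ : lam) :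
    IsOpen (sheet (S := S) γ δ) := by
  cases subsingleton_or_nontrivial S
  · convert isOpen_empty
    exact eq_empty_of_forall_notMem fun _ ⟨s, _⟩ => s.2 (Subsingleton.elim _ _)
  · rw [sheet_eq_preimage_sheetProj]
    exact isOpen_compl_singleton.preimage ((hsep _).2.comp (hsep _).1)

end Brandt

theorem brandt_countablyCompact_nhds_zero_general {S lam : Type*} [MonoidWithZero S]
    [tB : TopologicalSpace (Brandt S lam)]
    [T2Space (Brandt S lam)]
    (hsep : SepCont (brandtMul (S := S) (lam := lam)))
    (hcc : CountablyCompactSp (Brandt S lam)) :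
    ∀ U : Set (Brandt S lam), IsOpen U → none ∈ U →
      {p : lam × lam | ¬ (sheet0 (S := S) p.1 p.2 ⊆ U)}.Finite := by
  intro U hU hU0
  have := hcc.countablyCompactSpace
  have hUc : Uᶜ ⊆ ⋃ p : lam × lam, sheet p.1 p.2 :=
    (compl_subset_compl.2 (singleton_subset_iff.2 hU0)).trans
      compl_singleton_none_subset_iUnion_sheet
  simp_rw [not_sheet0_subset_iff hU0]
  exact hU.isClosed_compl.finite_setOf_inter_nonempty_of_pairwise_disjoint
    (fun p => isOpen_sheet hsep p.1 p.2) pairwise_disjoint_sheet hUc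

/-- In a countably compact Hausdorff semitopological Brandt extension, every open
neighbourhood of zero contains all but finitely many sheets `S_{α,β}`. -/
theorem brandt_countablyCompact_nhds_zero {S lam : Type*} [MonoidWithZero S]
    [TopologicalSpace S] [tB : TopologicalSpace (Brandt S lam)]
    [T2Space (Brandt S lam)]
    (hsep : SepCont (brandtMul (S := S) (lam := lam)))
    (hS : ∀ t : S, Continuous (fun x => t * x) ∧ Continuous (fun x => x * t))
    (alpha : lam) (hemb : Topology.IsEmbedding (brandtIncl (S := S) (lam := lam) alpha))
    (hcc : CountablyCompactSp (Brandt S lam)) :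
    ∀ U : Set (Brandt S lam), IsOpen U → none ∈ U →
      {p : lam × lam | ¬ (sheet0 (S := S) p.1 p.2 ⊆ U)}.Finite :=
  brandt_countablyCompact_nhds_zero_general (tB := tB) hsep hcc
end

section
/- Let S be a Hausdorff semitopological monoid with zero, λ ≥ 1 a cardinal, and equip B⁰_λ(S) with the topology τ_B^S whose basic neighbourhoods of a nonzero point (α,s,β) are sets (U(s))*_{α,β} with U(s) an open neighbourhood of s in S not containing 0_S removed appropriately, and whose basic neighbourhoods of 0 are sets U_A(0) = ⋃_{(α,β)∉A} S_{α,β} ∪ ⋃_{(γ,δ)∈A} (U(0_S))_{γ,δ} for finite A ⊆ λ×λ and open neighbourhoods U(0_S) of 0_S. Then (B⁰_λ(S), τ_B^S) is regular if and only if S is regular. -/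
open Topology Set Filter

/-! Every point of `B⁰_λ(S)` has a neighbourhood base of basic sets: traces `U*_{α,β}` at nonzero
points and sets `U_A(0)` at zero. For closed `C ⊆ S` the sets `C_A(0)`, and `C*_{α,β}` when
`0 ∉ C`, are closed, their complements being basic open sets; so closed neighbourhood bases of `S`
lift to `B⁰_λ(S)`. Conversely, since points of `S` are closed, `s ↦ (α, s, α)` (with `0 ↦ 0`)
embeds `S` as a subspace of `B⁰_λ(S)`, and regularity passes to subspaces. -/

theorem hasBasis_nhds_generateFrom {X ι : Type*} {g : Set (Set X)} {x : X} {p : ι → Prop}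
    {s : ι → Set X} (hg : ∀ i, p i → s i ∈ g ∧ x ∈ s i)
    (hsub : ∀ W ∈ g, x ∈ W → ∃ i, p i ∧ s i ⊆ W)
    (hdir : ∀ i, p i → ∀ j, p j → ∃ k, p k ∧ s k ⊆ s i ∧ s k ⊆ s j) (hne : ∃ i, p i) :
    (@nhds X (.generateFrom g) x).HasBasis p s := by
  convert hasBasis_biInf_principal' hdir hne using 1
  rw [TopologicalSpace.nhds_generateFrom]
  refine le_antisymm (le_iInf₂ fun i hi => iInf₂_le (s i) ⟨(hg i hi).2, (hg i hi).1⟩)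
    (le_iInf₂ fun W ⟨hxW, hW⟩ => ?_)
  obtain ⟨i, hi, hiW⟩ := hsub W hW hxW
  exact (iInf₂_le i hi).trans (principal_mono.2 hiW)

namespace Brandt

variable {S lam : Type*} [Zero S]

section Sets

variable {α β γ δ : lam} {t : {s : S // s ≠ 0}} {A A' : Set (lam × lam)} {U U' : Set S}

@[simp]
theorem some_mem_sheetTrace :
    (some (γ, t, δ) : Brandt S lam) ∈ sheetTrace α β U ↔ γ = α ∧ δ = β ∧ t.1 ∈ U := by
  simp only [sheetTrace, mem_ofPred_eq, Option.some.injEq, Prod.mk.injEq]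
  constructor
  · rintro ⟨s, hs, rfl, rfl, rfl⟩
    exact ⟨rfl, rfl, hs⟩
  · rintro ⟨rfl, rfl, hs⟩
    exact ⟨t, hs, rfl, rfl, rfl⟩

@[simp]
theorem none_notMem_sheetTrace : (none : Brandt S lam) ∉ sheetTrace α β U := by
  rintro ⟨s, -, ⟨⟩⟩

@[simp]
theorem none_mem_UA0 : (none : Brandt S lam) ∈ UA0 A U := Or.inl rfl

@[simp]
theorem some_mem_UA0 :
    (some (γ, t, δ) : Brandt S lam) ∈ UA0 A U ↔ (γ, δ) ∉ A ∨ t.1 ∈ U := by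
  simp only [UA0, mem_ofPred_eq, reduceCtorEq, Option.some.injEq, Prod.mk.injEq, false_or]
  constructor
  · rintro ⟨_, _, _, ⟨rfl, rfl, rfl⟩, h⟩
    exact h
  · exact fun h => ⟨γ, δ, t, ⟨rfl, rfl, rfl⟩, h⟩

theorem sheetTrace_mono (h : U ⊆ U') : sheetTrace (lam := lam) α β U ⊆ sheetTrace α β U' := by
  rintro _ ⟨s, hs, rfl⟩
  exact ⟨s, h hs, rfl⟩

theorem UA0_subset_UA0 (hA : A ⊆ A') (hU : U ⊆ U') : UA0 (S := S) A' U ⊆ UA0 A U' := by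
  rintro (_ | ⟨γ, t, δ⟩) h
  · exact none_mem_UA0
  · exact some_mem_UA0.2 ((some_mem_UA0.1 h).imp (mt (@hA _)) (@hU _))

theorem sheetTrace_subset_UA0 (h : (α, β) ∉ A ∨ U ⊆ U') :
    sheetTrace (lam := lam) α β U ⊆ UA0 A U' := by
  rintro _ ⟨s, hs, rfl⟩
  exact some_mem_UA0.2 (h.imp_right fun hU => hU hs)

theorem compl_sheetTrace : (sheetTrace (lam := lam) α β U)ᶜ = UA0 {(α, β)} Uᶜ := by
  ext (_ | ⟨γ, t, δ⟩) <;> simp [imp_iff_not_or, or_assoc]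

theorem compl_UA0 : (UA0 (S := S) A U)ᶜ = ⋃ p ∈ A, sheetTrace (lam := lam) p.1 p.2 Uᶜ := by
  ext (_ | ⟨γ, t, δ⟩) <;> simp

@[simp]
theorem brandtIncl_zero (α : lam) : brandtIncl (S := S) α 0 = none := dif_pos rfl

theorem brandtIncl_of_ne {s : S} (hs : s ≠ 0) (α : lam) :
    brandtIncl α s = some (α, ⟨s, hs⟩, α) := dif_neg hs

theorem preimage_brandtIncl_sheetTrace (α γ δ : lam) (U : Set S) :
    brandtIncl α ⁻¹' sheetTrace γ δ U = {s | α = γ ∧ α = δ ∧ s ∈ U ∧ s ≠ 0} := by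
  ext s
  by_cases hs : s = 0
  · simp [hs]
  · simp [brandtIncl_of_ne hs, hs]

theorem preimage_brandtIncl_UA0 (α : lam) (A : Set (lam × lam)) {U : Set S} (h0 : (0 : S) ∈ U) :
    brandtIncl α ⁻¹' UA0 A U = {s | (α, α) ∉ A ∨ s ∈ U} := by
  ext s
  by_cases hs : s = 0
  · simp [hs, h0]
  · simp [brandtIncl_of_ne hs]

end Sets

section Topology

variable [TopologicalSpace S]

theorem isOpen_sheetTrace {U : Set S} (hU : IsOpen U) (α β : lam) :
    IsOpen[brandtTop S lam] (sheetTrace α β U) :=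
  .basic _ (Or.inl ⟨α, β, U, hU, rfl⟩)

theorem isOpen_UA0 {A : Set (lam × lam)} {U : Set S} (hA : A.Finite) (hU : IsOpen U)
    (h0 : (0 : S) ∈ U) : IsOpen[brandtTop S lam] (UA0 A U) :=
  .basic _ (Or.inr ⟨A, hA, U, hU, h0, rfl⟩)

theorem isClosed_sheetTrace {C : Set S} (hC : IsClosed C) (h0 : (0 : S) ∉ C) (α β : lam) :
    IsClosed[brandtTop S lam] (sheetTrace α β C) := by
  rw [← @isOpen_compl_iff _ _ (brandtTop S lam), compl_sheetTrace]
  exact isOpen_UA0 (finite_singleton _) hC.isOpen_compl h0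

theorem isClosed_UA0 {A : Set (lam × lam)} {C : Set S} (hC : IsClosed C) :
    IsClosed[brandtTop S lam] (UA0 A C) := by
  let := brandtTop S lam
  rw [← isOpen_compl_iff, compl_UA0]
  exact isOpen_biUnion fun p _ => isOpen_sheetTrace hC.isOpen_compl p.1 p.2

theorem hasBasis_nhds_some (α β : lam) (a : {s : S // s ≠ 0}) :
    (@nhds _ (brandtTop S lam) (some (α, a, β))).HasBasis
      (fun U : Set S => IsOpen U ∧ a.1 ∈ U) (sheetTrace α β) := by
  refine hasBasis_nhds_generateFrom (fun U ⟨hU, ha⟩ => ⟨Or.inl ⟨α, β, U, hU, rfl⟩, ⟨a, ha, rfl⟩⟩)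
    ?_ (fun U ⟨hU, ha⟩ V ⟨hV, hb⟩ => ⟨U ∩ V, ⟨hU.inter hV, ha, hb⟩,
      sheetTrace_mono inter_subset_left, sheetTrace_mono inter_subset_right⟩)
    ⟨univ, isOpen_univ, trivial⟩
  rintro W (⟨γ, δ, U, hU, rfl⟩ | ⟨A, -, U, hU, -, rfl⟩) hx
  · obtain ⟨rfl, rfl, ha⟩ := some_mem_sheetTrace.1 hx
    exact ⟨U, ⟨hU, ha⟩, subset_rfl⟩
  · rcases some_mem_UA0.1 hx with hA | ha
    · exact ⟨univ, ⟨isOpen_univ, trivial⟩, sheetTrace_subset_UA0 (.inl hA)⟩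
    · exact ⟨U, ⟨hU, ha⟩, sheetTrace_subset_UA0 (.inr subset_rfl)⟩

theorem hasBasis_nhds_none :
    (@nhds _ (brandtTop S lam) none).HasBasis
      (fun q : Set (lam × lam) × Set S => q.1.Finite ∧ IsOpen q.2 ∧ (0 : S) ∈ q.2)
      (fun q => UA0 q.1 q.2) := by
  refine hasBasis_nhds_generateFrom
    (fun ⟨A, U⟩ ⟨hA, hU, h0⟩ => ⟨Or.inr ⟨A, hA, U, hU, h0, rfl⟩, none_mem_UA0⟩) ?_
    (fun ⟨A, U⟩ ⟨hA, hU, h0⟩ ⟨A', U'⟩ ⟨hA', hU', h0'⟩ =>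
      ⟨(A ∪ A', U ∩ U'), ⟨hA.union hA', hU.inter hU', h0, h0'⟩,
        UA0_subset_UA0 subset_union_left inter_subset_left,
        UA0_subset_UA0 subset_union_right inter_subset_right⟩)
    ⟨(∅, univ), finite_empty, isOpen_univ, trivial⟩
  rintro W (⟨γ, δ, U, -, rfl⟩ | ⟨A, hA, U, hU, h0, rfl⟩) hx
  · exact absurd hx none_notMem_sheetTrace
  · exact ⟨(A, U), ⟨hA, hU, h0⟩, subset_rfl⟩

theorem regularSpace_brandtTop [RegularSpace S] [T1Space S] :
    @RegularSpace _ (brandtTop S lam) := by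
  let := brandtTop S lam
  refine .of_exists_mem_nhds_isClosed_subset fun x W hW => ?_
  rcases x with _ | ⟨α, a, β⟩
  · obtain ⟨⟨A, U⟩, ⟨hA, hU, h0⟩, hUW⟩ := hasBasis_nhds_none.mem_iff.1 hW
    obtain ⟨C, hC, hCc, hCU⟩ := exists_mem_nhds_isClosed_subset (hU.mem_nhds h0)
    refine ⟨UA0 A C, ?_, isClosed_UA0 hCc, (UA0_subset_UA0 subset_rfl hCU).trans hUW⟩
    exact hasBasis_nhds_none.mem_of_superset (i := (A, interior C))
      ⟨hA, isOpen_interior, mem_interior_iff_mem_nhds.2 hC⟩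
      (UA0_subset_UA0 subset_rfl interior_subset)
  · obtain ⟨U, ⟨hU, ha⟩, hUW⟩ := (hasBasis_nhds_some α β a).mem_iff.1 hW
    obtain ⟨C, hC, hCc, hCU⟩ :=
      exists_mem_nhds_isClosed_subset ((hU.inter isOpen_ne).mem_nhds ⟨ha, a.2⟩)
    refine ⟨sheetTrace α β C, ?_, isClosed_sheetTrace hCc (fun h => (hCU h).2 rfl) α β,
      (sheetTrace_mono fun _ h => (hCU h).1).trans hUW⟩
    exact (hasBasis_nhds_some α β a).mem_of_superset (i := interior C)
      ⟨isOpen_interior, mem_interior_iff_mem_nhds.2 hC⟩ (sheetTrace_mono interior_subset)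

theorem induced_brandtIncl [T1Space S] (α : lam) :
    (brandtTop S lam).induced (brandtIncl α) = ‹TopologicalSpace S› := by
  let := brandtTop S lam
  refine le_antisymm (fun U hU => isOpen_induced_iff.2 ?_) (le_induced_generateFrom ?_)
  · by_cases h0 : (0 : S) ∈ U
    · refine ⟨_, isOpen_UA0 (finite_singleton (α, α)) hU h0, ?_⟩
      simp [preimage_brandtIncl_UA0 _ _ h0]
    · refine ⟨_, isOpen_sheetTrace hU α α, ?_⟩
      simpa [preimage_brandtIncl_sheetTrace] using fun s hs => ne_of_mem_of_not_mem hs h0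
  · rintro _ (⟨γ, δ, U, hU, rfl⟩ | ⟨A, -, U, hU, h0, rfl⟩)
    · rw [preimage_brandtIncl_sheetTrace]
      exact isOpen_const.and (isOpen_const.and (hU.and isOpen_ne))
    · rw [preimage_brandtIncl_UA0 α A h0]
      exact isOpen_const.union hU

end Topology

end Brandt

theorem brandt_regular_iff_general {S lam : Type*} [MonoidWithZero S] [TopologicalSpace S]
    [T2Space S] [Nonempty lam] :
    @RegularSpace (Brandt S lam) (brandtTop S lam) ↔ RegularSpace S := by
  refine ⟨fun h => ?_, fun _ => Brandt.regularSpace_brandtTop⟩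
  obtain ⟨α⟩ := ‹Nonempty lam›
  rw [← Brandt.induced_brandtIncl (S := S) (lam := lam) α]
  exact @regularSpace_induced _ _ (brandtTop S lam) h _

/-- The canonical Brandt extension topology `τ_B^S` is regular iff `S` is regular. -/
theorem brandt_regular_iff {S lam : Type*} [MonoidWithZero S] [TopologicalSpace S]
    [T2Space S] [Nonempty lam] (hsep : SepCont (fun x y : S => x * y)) :
    @RegularSpace (Brandt S lam) (brandtTop S lam) ↔ RegularSpace S :=
  brandt_regular_iff_general
end

section
/- Let S be a Hausdorff semitopological monoid with zero, λ ≥ 1 a cardinal, and τ_B^S the canonical topology on the Brandt λ⁰-extension B⁰_λ(S) (disjoint-sum topology on the nonzero part, cofinite-sheet neighbourhoods of zero). Then the density satisfies d(B⁰_λ(S), τ_B^S) = max{λ, d(S)} (for infinite values). In particular, (B⁰_λ(S), τ_B^S) is separable if and only if S is separable and λ ≤ ℵ₀. -/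
/-! Each sheet map `s ↦ (α, s, β)` is a continuous open injection of `S \ {0}` into
`B⁰_λ(S)`. So the traces of a dense subset of `S` on all `λ × λ` sheets, together with `0`,
are dense, giving `d(B⁰_λ(S)) ≤ λ · d(S) · λ + 1`. Conversely a dense subset meets each of the
`λ` pairwise disjoint open sheets `S*_{α,α}`, and its trace on one of them, together with `0`,
is dense in `S`; so `λ ≤ d(B⁰_λ(S))` and `d(S) ≤ d(B⁰_λ(S)) + 1`. Both claims are cardinal
arithmetic from here. -/

open Topology Set Filter

/-- The density of a topological space: the least cardinality of a dense subset. -/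
noncomputable def dens (X : Type u) [TopologicalSpace X] : Cardinal.{u} :=
  ⨅ A : {A : Set X // Dense A}, Cardinal.mk A.1


open scoped Cardinal

section Density

variable {X : Type u} [TopologicalSpace X]

theorem dens_le_mk {A : Set X} (hA : Dense A) : dens X ≤ #A :=
  ciInf_le' (fun A : {A : Set X // Dense A} => #A.1) ⟨A, hA⟩

theorem exists_dense_mk_eq_dens : ∃ A : Set X, Dense A ∧ #A = dens X := by
  have : Nonempty {A : Set X // Dense A} := ⟨⟨univ, dense_univ⟩⟩
  obtain ⟨A, hA⟩ := ciInf_mem fun A : {A : Set X // Dense A} => #A.1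
  exact ⟨A.1, A.2, hA⟩

theorem separableSpace_iff_dens_le_aleph0 :
    TopologicalSpace.SeparableSpace X ↔ dens X ≤ Cardinal.aleph0 := by
  constructor
  · intro _
    obtain ⟨A, hAc, hAd⟩ := TopologicalSpace.exists_countable_dense X
    exact (dens_le_mk hAd).trans (Cardinal.le_aleph0_iff_set_countable.mpr hAc)
  · intro h
    obtain ⟨A, hAd, hA⟩ := exists_dense_mk_eq_dens (X := X)
    exact ⟨⟨A, Cardinal.le_aleph0_iff_set_countable.mp (hA ▸ h), hAd⟩⟩

theorem mk_le_mk_of_dense_of_pairwiseDisjoint {ι : Type u} {A : Set X} (hA : Dense A)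
    {U : ι → Set X} (hUo : ∀ i, IsOpen (U i)) (hUne : ∀ i, (U i).Nonempty)
    (hdisj : Pairwise fun i j => Disjoint (U i) (U j)) : #ι ≤ #A := by
  choose f hf using fun i => hA.inter_open_nonempty (U i) (hUo i) (hUne i)
  refine Cardinal.mk_le_of_injective (f := fun i => (⟨f i, (hf i).2⟩ : A)) fun i j hij => ?_
  by_contra hne
  exact (hdisj hne).ne_of_mem (hf i).1 (hf j).1 (congrArg Subtype.val hij)

theorem Dense.insert_image_val {a : X} {T : Set {x : X // x ≠ a}} (hT : Dense T) :
    Dense (insert a (Subtype.val '' T)) := by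
  intro x
  by_cases hx : x = a
  · exact subset_closure (by rw [hx]; exact mem_insert a _)
  · exact closure_mono (subset_insert _ _)
      (continuous_subtype_val.range_subset_closure_image_dense hT ⟨⟨x, hx⟩, rfl⟩)

end Density

theorem Cardinal.mul_mul_add_one_le {a b κ : Cardinal} (hκ : aleph0 ≤ κ) (ha : a ≤ κ)
    (hb : b ≤ κ) : a * (b * a) + 1 ≤ κ :=
  add_le_of_le hκ (mul_le_of_le hκ ha (mul_le_of_le hκ hb ha)) (one_le_aleph0.trans hκ)

theorem Cardinal.le_of_le_add_one {a b : Cardinal} (ha : aleph0 ≤ a) (h : a ≤ b + 1) :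
    a ≤ b := by
  rcases lt_or_ge b aleph0 with hb | hb
  · exact absurd (h.trans_lt (add_lt_aleph0 hb one_lt_aleph0)) ha.not_gt
  · rwa [add_one_eq hb] at h

namespace Brandt

variable {S lam : Type u} [Zero S]

def sheetMap (α β : lam) (s : {s : S // s ≠ 0}) : Brandt S lam :=
  some (α, s, β)

theorem sheetMap_injective (α β : lam) : Function.Injective (sheetMap (S := S) α β) :=
  fun _ _ h => by simpa [sheetMap] using h

theorem sheetMap_mem_sheetTrace {α β γ δ : lam} {U : Set S} {s : {s : S // s ≠ 0}} :
    sheetMap α β s ∈ sheetTrace γ δ U ↔ α = γ ∧ β = δ ∧ s.1 ∈ U := by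
  constructor
  · rintro ⟨t, ht, h⟩
    obtain ⟨rfl, rfl, rfl⟩ : α = γ ∧ s = t ∧ β = δ := by simpa [sheetMap] using h
    exact ⟨rfl, rfl, ht⟩
  · rintro ⟨rfl, rfl, hs⟩
    exact ⟨s, hs, rfl⟩

theorem sheetMap_mem_UA0 {α β : lam} {A : Set (lam × lam)} {U : Set S}
    {s : {s : S // s ≠ 0}} : sheetMap α β s ∈ UA0 A U ↔ (α, β) ∉ A ∨ s.1 ∈ U := by
  constructor
  · rintro (h | ⟨γ, δ, t, h, ht⟩)
    · simp [sheetMap] at h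
    · obtain ⟨rfl, rfl, rfl⟩ : α = γ ∧ s = t ∧ β = δ := by simpa [sheetMap] using h
      exact ht
  · exact fun h => Or.inr ⟨α, β, s, rfl, h⟩

theorem image_sheetMap_preimage_val (α β : lam) (U : Set S) :
    sheetMap α β '' (Subtype.val ⁻¹' U) = sheetTrace α β U :=
  Set.ext fun _ =>
    ⟨fun ⟨s, hs, h⟩ => ⟨s, hs, h.symm⟩, fun ⟨s, hs, h⟩ => ⟨s, hs, h.symm⟩⟩

variable [TopologicalSpace S]

local instance : TopologicalSpace (Brandt S lam) := brandtTop S lam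

theorem continuous_sheetMap (α β : lam) : Continuous (sheetMap (S := S) α β) := by
  refine continuous_generateFrom_iff.mpr ?_
  rintro W (⟨γ, δ, U, hU, rfl⟩ | ⟨A, -, U, hU, -, rfl⟩)
  · have : sheetMap α β ⁻¹' sheetTrace γ δ U =
        {_s | α = γ ∧ β = δ} ∩ Subtype.val ⁻¹' U := by
      ext s; simp [sheetMap_mem_sheetTrace, and_assoc]
    rw [this]
    exact isOpen_const.inter (hU.preimage continuous_subtype_val)
  · have : sheetMap α β ⁻¹' UA0 A U = {_s | (α, β) ∉ A} ∪ Subtype.val ⁻¹' U := by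
      ext s; simp [sheetMap_mem_UA0]
    rw [this]
    exact isOpen_const.union (hU.preimage continuous_subtype_val)

theorem isOpenMap_sheetMap (α β : lam) : IsOpenMap (sheetMap (S := S) α β) := by
  rintro _ ⟨U, hU, rfl⟩
  rw [image_sheetMap_preimage_val]
  exact TopologicalSpace.isOpen_generateFrom_of_mem (Or.inl ⟨α, β, U, hU, rfl⟩)

theorem mk_le_dens [Nontrivial S] : #lam ≤ dens (Brandt S lam) := by
  obtain ⟨D, hD, hDmk⟩ := exists_dense_mk_eq_dens (X := Brandt S lam)
  obtain ⟨s, hs⟩ := exists_ne (0 : S)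
  rw [← hDmk]
  refine mk_le_mk_of_dense_of_pairwiseDisjoint hD (U := fun α => range (sheetMap α α))
    (fun α => (isOpenMap_sheetMap α α).isOpen_range) (fun _ => ⟨_, ⟨⟨s, hs⟩, rfl⟩⟩) ?_
  intro α β hαβ
  refine Set.disjoint_range_iff.mpr fun s t h => hαβ ?_
  simp only [sheetMap, Option.some_inj, Prod.mk.injEq] at h
  exact h.1

theorem dens_le_dens_add_one [Nonempty lam] : dens S ≤ dens (Brandt S lam) + 1 := by
  obtain ⟨D, hD, hDmk⟩ := exists_dense_mk_eq_dens (X := Brandt S lam)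
  obtain ⟨α⟩ := ‹Nonempty lam›
  calc dens S ≤ #(insert 0 (Subtype.val '' (sheetMap α α ⁻¹' D)) : Set S) :=
        dens_le_mk (hD.preimage (isOpenMap_sheetMap α α)).insert_image_val
    _ ≤ #(sheetMap α α ⁻¹' D) + 1 :=
      Cardinal.mk_insert_le.trans (by gcongr; exact Cardinal.mk_image_le)
    _ ≤ dens (Brandt S lam) + 1 := by
      rw [← hDmk]
      gcongr
      exact Cardinal.mk_preimage_of_injective _ _ (sheetMap_injective α α)

theorem dens_le [T1Space S] :
    dens (Brandt S lam) ≤ #lam * (dens S * #lam) + 1 := by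
  obtain ⟨D, hD, hDmk⟩ := exists_dense_mk_eq_dens (X := S)
  set T : Set {s : S // s ≠ 0} := Subtype.val ⁻¹' D
  have hT : Dense T := hD.preimage isOpen_ne.isOpenMap_subtype_val
  set f : lam × T × lam → Brandt S lam := fun p => sheetMap p.1 p.2.2 p.2.1
  have hf : Dense (insert none (range f)) := by
    rintro (_ | ⟨α, s, β⟩)
    · exact subset_closure (mem_insert _ _)
    · refine closure_mono ?_
        ((continuous_sheetMap α β).range_subset_closure_image_dense hT ⟨s, rfl⟩)
      rintro _ ⟨t, ht, rfl⟩
      exact Or.inr ⟨(α, ⟨t, ht⟩, β), rfl⟩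
  calc dens (Brandt S lam) ≤ #(insert none (range f) : Set (Brandt S lam)) := dens_le_mk hf
    _ ≤ #(lam × T × lam) + 1 :=
      Cardinal.mk_insert_le.trans (by gcongr; exact Cardinal.mk_range_le)
    _ ≤ #lam * (dens S * #lam) + 1 := by
      rw [← hDmk]
      simp only [Cardinal.mk_prod, Cardinal.lift_id]
      gcongr
      exact Cardinal.mk_preimage_of_injective _ _ Subtype.val_injective

end Brandt

theorem brandt_density_general {S lam : Type u} [MonoidWithZero S] [TopologicalSpace S]
    [T2Space S] [Nontrivial S] [Nonempty lam] :
    (Cardinal.aleph0 ≤ max (Cardinal.mk lam) (dens S) →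
      @dens (Brandt S lam) (brandtTop S lam) = max (Cardinal.mk lam) (dens S)) ∧
    (@TopologicalSpace.SeparableSpace (Brandt S lam) (brandtTop S lam) ↔
      TopologicalSpace.SeparableSpace S ∧ Cardinal.mk lam ≤ Cardinal.aleph0) := by
  let _ : TopologicalSpace (Brandt S lam) := brandtTop S lam
  have hupper := Brandt.dens_le (S := S) (lam := lam)
  have hlam := Brandt.mk_le_dens (S := S) (lam := lam)
  have hS := Brandt.dens_le_dens_add_one (S := S) (lam := lam)
  refine ⟨fun hκ => le_antisymm ?_ ?_, ?_⟩
  · exact hupper.trans (Cardinal.mul_mul_add_one_le hκ (le_max_left _ _) (le_max_right _ _))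
  · exact Cardinal.le_of_le_add_one hκ (max_le (hlam.trans (self_le_add_right _ _)) hS)
  · rw [separableSpace_iff_dens_le_aleph0, separableSpace_iff_dens_le_aleph0]
    constructor
    · intro h
      exact ⟨hS.trans (Cardinal.add_le_of_le le_rfl h Cardinal.one_le_aleph0), hlam.trans h⟩
    · rintro ⟨hd, hl⟩
      exact hupper.trans (Cardinal.mul_mul_add_one_le le_rfl hl hd)

/-- Density of the Brandt extension: `d(B⁰_λ(S)) = max {λ, d(S)}` (for infinite
values); in particular `B⁰_λ(S)` is separable iff `S` is separable and `λ ≤ ℵ₀`. -/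
theorem brandt_density {S lam : Type u} [MonoidWithZero S] [TopologicalSpace S]
    [T2Space S] [Nontrivial S] [Nonempty lam]
    (hsep : SepCont (fun x y : S => x * y)) :
    (Cardinal.aleph0 ≤ max (Cardinal.mk lam) (dens S) →
      @dens (Brandt S lam) (brandtTop S lam) = max (Cardinal.mk lam) (dens S)) ∧
    (@TopologicalSpace.SeparableSpace (Brandt S lam) (brandtTop S lam) ↔
      TopologicalSpace.SeparableSpace S ∧ Cardinal.mk lam ≤ Cardinal.aleph0) :=
  brandt_density_general
end
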